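/- Fold nondegeneracy of the pseudo-arclength system: let F : ℝⁿ × ℝ → ℝⁿ be C¹ with F(u₀,λ₀) = 0, dim ker F_u(u₀,λ₀) = 1, and F_λ(u₀,λ₀) ∉ ran F_u(u₀,λ₀). Let (u̇₀, λ̇₀) ∈ ℝⁿ × ℝ be a tangent vector with λ̇₀ = 0 and u̇₀ spanning ker F_u(u₀,λ₀). Then the (n+1)×(n+1) bordered Jacobian [[F_u, F_λ],[u̇₀ᵀ, λ̇₀]] evaluated at (u₀,λ₀) is nonsingular. -/

import Mathlib

/-! If `(h, t)` lies in the kernel of the bordered map, then `A h = -t • b` forces `t = 0` since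
`b ∉ range A`; hence `h ∈ ker A = ℝ ∙ u̇₀`, and `u̇₀ ⬝ᵥ h = 0` forces `h = 0` because
`u̇₀ ⬝ᵥ u̇₀ > 0`. An injective endomorphism of a finite-dimensional space is bijective. -/

open LinearMap Module

theorem Submodule.eq_span_singleton_of_finrank_eq_one {K V : Type*} [Field K] [AddCommGroup V]
    [Module K V] {S : Submodule K V} (hS : finrank K S = 1) {v : V} (hv : v ≠ 0) (hvS : v ∈ S) :
    S = K ∙ v := by
  have : FiniteDimensional K S := .of_finrank_eq_succ hS
  refine (Submodule.eq_of_le_of_finrank_eq ?_ ?_).symm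
  · exact (Submodule.span_singleton_le_iff_mem v S).mpr hvS
  · rw [finrank_span_singleton hv, hS]

section Bordered

variable {K V : Type*} [Field K] [AddCommGroup V] [Module K V]

def borderedMap (A : V →ₗ[K] V) (b : V) (φ : V →ₗ[K] K) (d : K) : V × K →ₗ[K] V × K :=
  (A.coprod (toSpanSingleton K V b)).prod (φ.coprod (d • LinearMap.id))

@[simp]
theorem borderedMap_apply (A : V →ₗ[K] V) (b : V) (φ : V →ₗ[K] K) (d : K) (p : V × K) :
    borderedMap A b φ d p = (A p.1 + p.2 • b, φ p.1 + d * p.2) :=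
  rfl

theorem eq_zero_of_add_smul_eq_zero_of_notMem_range {A : V →ₗ[K] V} {b h : V} {t : K}
    (hb : b ∉ range A) (hAh : A h + t • b = 0) : t = 0 := by
  by_contra ht
  refine hb ⟨-t⁻¹ • h, ?_⟩
  rw [map_smul, eq_neg_of_add_eq_zero_left hAh, smul_neg, neg_smul, neg_neg, smul_smul,
    inv_mul_cancel₀ ht, one_smul]

theorem ker_borderedMap_eq_bot {A : V →ₗ[K] V} {b : V} {φ : V →ₗ[K] K} (d : K)
    (hb : b ∉ range A) (hφ : Disjoint (ker A) (ker φ)) : ker (borderedMap A b φ d) = ⊥ := by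
  refine ker_eq_bot'.mpr fun ⟨h, t⟩ hp => ?_
  obtain ⟨hAh, hφh⟩ := Prod.ext_iff.mp hp
  simp only [borderedMap_apply, Prod.fst_zero, Prod.snd_zero] at hAh hφh
  obtain rfl : t = 0 := eq_zero_of_add_smul_eq_zero_of_notMem_range hb hAh
  rw [zero_smul, add_zero] at hAh
  rw [mul_zero, add_zero] at hφh
  exact Prod.ext_iff.mpr ⟨(Submodule.disjoint_def.mp hφ) h hAh hφh, rfl⟩

theorem bijective_borderedMap [FiniteDimensional K V] {A : V →ₗ[K] V} {b : V} {φ : V →ₗ[K] K}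
    (d : K) (hb : b ∉ range A) (hφ : Disjoint (ker A) (ker φ)) :
    Function.Bijective (borderedMap A b φ d) := by
  have hinj : Function.Injective (borderedMap A b φ d) :=
    ker_eq_bot.mp (ker_borderedMap_eq_bot d hb hφ)
  exact ⟨hinj, injective_iff_surjective.mp hinj⟩

end Bordered

theorem fold_bordered_jacobian_nonsingular_general {n : ℕ}
    (A : (Fin n → ℝ) →L[ℝ] (Fin n → ℝ)) (b : Fin n → ℝ)
    (hker : Module.finrank ℝ (LinearMap.ker (A : (Fin n → ℝ) →ₗ[ℝ] (Fin n → ℝ))) = 1)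
    (hbnot : b ∉ LinearMap.range (A : (Fin n → ℝ) →ₗ[ℝ] (Fin n → ℝ)))
    (udot₀ : Fin n → ℝ) (lamdot₀ : ℝ)
    (hudot : udot₀ ≠ 0) (hudotker : A udot₀ = 0) :
    Function.Bijective (fun p : (Fin n → ℝ) × ℝ =>
      ((A p.1 + p.2 • b, (∑ i, udot₀ i * p.1 i) + lamdot₀ * p.2) :
        (Fin n → ℝ) × ℝ)) := by
  let φ := dotProductBilin ℝ ℝ udot₀
  have hkerA : ker (A : (Fin n → ℝ) →ₗ[ℝ] (Fin n → ℝ)) = ℝ ∙ udot₀ :=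
    Submodule.eq_span_singleton_of_finrank_eq_one hker hudot hudotker
  have hφ : Disjoint (ker (A : (Fin n → ℝ) →ₗ[ℝ] (Fin n → ℝ))) (ker φ) := by
    rw [hkerA, disjoint_comm, Submodule.disjoint_span_singleton]
    exact fun h => dotProduct_self_eq_zero.mp h
  exact bijective_borderedMap lamdot₀ hbnot hφ

/-- Fold nondegeneracy of the pseudo-arclength system: if `F : ℝⁿ × ℝ → ℝⁿ` is `C¹`
with `F(u₀,λ₀) = 0`, `dim ker F_u(u₀,λ₀) = 1`, `F_λ(u₀,λ₀) ∉ ran F_u(u₀,λ₀)`, and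
`(u̇₀, λ̇₀)` is a tangent vector with `λ̇₀ = 0` and `u̇₀` spanning `ker F_u(u₀,λ₀)`,
then the bordered Jacobian `(h,t) ↦ (F_u h + t F_λ, u̇₀ᵀh + λ̇₀ t)` is nonsingular. -/
theorem fold_bordered_jacobian_nonsingular {n : ℕ}
    (F : (Fin n → ℝ) × ℝ → (Fin n → ℝ)) (u₀ : Fin n → ℝ) (lam₀ : ℝ)
    (hF : ContDiff ℝ 1 F) (h0 : F (u₀, lam₀) = 0)
    (A : (Fin n → ℝ) →L[ℝ] (Fin n → ℝ)) (b : Fin n → ℝ)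
    (hA : HasFDerivAt (fun u => F (u, lam₀)) A u₀)
    (hb : HasDerivAt (fun l => F (u₀, l)) b lam₀)
    (hker : Module.finrank ℝ (LinearMap.ker (A : (Fin n → ℝ) →ₗ[ℝ] (Fin n → ℝ))) = 1)
    (hbnot : b ∉ LinearMap.range (A : (Fin n → ℝ) →ₗ[ℝ] (Fin n → ℝ)))
    (udot₀ : Fin n → ℝ) (lamdot₀ : ℝ)
    (hudot : udot₀ ≠ 0) (hudotker : A udot₀ = 0) (hlamdot : lamdot₀ = 0) :
    Function.Bijective (fun p : (Fin n → ℝ) × ℝ =>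
      ((A p.1 + p.2 • b, (∑ i, udot₀ i * p.1 i) + lamdot₀ * p.2) :
        (Fin n → ℝ) × ℝ)) :=
  fold_bordered_jacobian_nonsingular_general A b hker hbnot udot₀ lamdot₀ hudot hudotker
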